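/- arXiv:1602.05950 — 4 statements merged into one kernel-verified Lean document; each statement's English description precedes it below -/
import Mathlib

section
/- Let A = B + C be m×n real matrices. Then for all j, σⱼ(A) ≤ σⱼ(B)·(1 + (1 + ‖C‖₂/σ_k(B))·(‖C‖₂/σⱼ(A))) for any k ≥ j with σ_k(B) > 0 and σⱼ(A) > 0. -/
open Matrix
noncomputable def specNorm {m n : Type*} [Fintype m] [Fintype n] [DecidableEq n]
    (A : Matrix m n ℝ) : ℝ :=
  ‖LinearMap.toContinuousLinearMap (Matrix.toEuclideanLin A)‖

noncomputable def frobNorm {m n : Type*} [Fintype m] [Fintype n]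
    (A : Matrix m n ℝ) : ℝ :=
  Real.sqrt (∑ i, ∑ j, (A i j) ^ 2)

/-- The `j`-th largest singular value of `A` (1-indexed), characterized as the
distance in spectral norm from `A` to the set of matrices of rank `< j`. -/
noncomputable def sval {m n : Type*} [Fintype m] [Fintype n] [DecidableEq n]
    (A : Matrix m n ℝ) (j : ℕ) : ℝ :=
  sInf { c | ∃ B : Matrix m n ℝ, B.rank < j ∧ specNorm (A - B) = c }

/-! Weyl's inequality `σⱼ(B + C) ≤ σⱼ(B) + ‖C‖₂`, used twice, and `σ_k(B) ≤ σⱼ(B)` suffice: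
after multiplying by `σⱼ(A)`,
`σⱼ(A)² ≤ σⱼ(A) σⱼ(B) + σⱼ(A) ‖C‖₂ ≤ σⱼ(A) σⱼ(B) + (σⱼ(B) + ‖C‖₂) ‖C‖₂`,
and `‖C‖₂² ≤ σⱼ(B) ‖C‖₂² / σ_k(B)`. -/

section SingularValues

variable {m n : Type*} [Fintype m] [Fintype n] [DecidableEq n]

lemma specNorm_nonneg (A : Matrix m n ℝ) : 0 ≤ specNorm A := norm_nonneg _

lemma specNorm_add_le (A B : Matrix m n ℝ) : specNorm (A + B) ≤ specNorm A + specNorm B := by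
  simp only [specNorm, map_add]
  exact norm_add_le _ _

lemma sval_zero (A : Matrix m n ℝ) : sval A 0 = 0 := by
  simp [sval]

lemma sval_le_specNorm_sub (A R : Matrix m n ℝ) {j : ℕ} (hR : R.rank < j) :
    sval A j ≤ specNorm (A - R) :=
  csInf_le ⟨0, by rintro c ⟨R, -, rfl⟩; exact specNorm_nonneg _⟩ ⟨R, hR, rfl⟩

lemma le_sval {A : Matrix m n ℝ} {j : ℕ} {c : ℝ} (hj : j ≠ 0)
    (h : ∀ R : Matrix m n ℝ, R.rank < j → c ≤ specNorm (A - R)) : c ≤ sval A j :=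
  le_csInf ⟨_, 0, by simpa [Nat.pos_iff_ne_zero] using hj, rfl⟩
    (by rintro c ⟨R, hR, rfl⟩; exact h R hR)

lemma sval_le_sval_of_le (A : Matrix m n ℝ) {j k : ℕ} (hj : j ≠ 0) (hjk : j ≤ k) :
    sval A k ≤ sval A j :=
  le_sval hj fun R hR => sval_le_specNorm_sub A R (hR.trans_le (by exact_mod_cast hjk))

lemma sval_add_le (B C : Matrix m n ℝ) (j : ℕ) : sval (B + C) j ≤ sval B j + specNorm C := by
  rcases eq_or_ne j 0 with rfl | hj
  · simpa [sval_zero] using specNorm_nonneg C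
  rw [← sub_le_iff_le_add]
  refine le_sval hj fun R hR => ?_
  calc sval (B + C) j - specNorm C ≤ specNorm (B - R + C) - specNorm C := by
        rw [sub_add_eq_add_sub]; gcongr; exact sval_le_specNorm_sub _ R hR
    _ ≤ specNorm (B - R) := by linarith [specNorm_add_le (B - R) C]

end SingularValues

/-- if A = B + C then
σⱼ(A) ≤ σⱼ(B)(1 + (1 + ‖C‖₂/σ_k(B))(‖C‖₂/σⱼ(A))) for k ≥ j with σ_k(B) > 0
and σⱼ(A) > 0. -/
theorem singular_value_bound_truncated_lu {m n : ℕ}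
    (A B C : Matrix (Fin m) (Fin n) ℝ) (j k : ℕ)
    (hABC : A = B + C)
    (hjk : j ≤ k)
    (hB : 0 < sval B k)
    (hA : 0 < sval A j) :
    sval A j ≤ sval B j *
      (1 + (1 + specNorm C / sval B k) * (specNorm C / sval A j)) := by
  have hj : j ≠ 0 := by rintro rfl; simp [sval_zero] at hA
  have hweyl : sval A j ≤ sval B j + specNorm C := hABC ▸ sval_add_le B C j
  have hmono : sval B k ≤ sval B j := sval_le_sval_of_le B hj hjk
  have hC := specNorm_nonneg C
  have hCsq : specNorm C ^ 2 ≤ sval B j * specNorm C ^ 2 / sval B k := by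
    rw [le_div_iff₀ hB, mul_comm]
    gcongr
  rw [← mul_le_mul_iff_right₀ hA]
  calc sval A j * sval A j ≤ sval A j * sval B j + sval A j * specNorm C := by
        rw [← mul_add]; gcongr
    _ ≤ sval A j * sval B j + (sval B j + specNorm C) * specNorm C := by gcongr
    _ ≤ sval A j * sval B j + sval B j * specNorm C + sval B j * specNorm C ^ 2 / sval B k := by
        linarith
    _ = sval A j * (sval B j * (1 + (1 + specNorm C / sval B k) * (specNorm C / sval A j))) := by
        field_simp
        ring
end

section
/- Let A ∈ ℝ^{m×n} and write A = B + C. Let Qᴸ = [Q₁ᴸ, Q₂ᴸ] ∈ ℝ^{m×m} and Qᵁ = [Q₁ᵁ, Q₂ᵁ] ∈ ℝ^{n×n} be orthogonal matrices with Q₁ᴸ ∈ ℝ^{m×k}, Q₁ᵁ ∈ ℝ^{n×k}, and assume (Q₂ᴸ)ᵀA = (Q₂ᴸ)ᵀC and A Q₂ᵁ = C Q₂ᵁ. Then ‖A − Q₁ᴸ(Q₁ᴸ)ᵀ A Q₁ᵁ(Q₁ᵁ)ᵀ‖_F ≤ ‖C‖_F. -/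
open Matrix
/-! Let `P = Q₁ᴸ(Q₁ᴸ)ᵀ` and `R = Q₁ᵁ(Q₁ᵁ)ᵀ` be the orthogonal projections onto the spans of the
first column blocks. The hypotheses turn the error `A − PAR = (1 − P)A + PA(1 − R)` into
`(1 − P)C + PC(1 − R)`, while `C = (1 − P)C + PC(1 − R) + PCR` splits into three pieces that are
pairwise orthogonal for the Frobenius inner product. So the error is `C` with the piece `PCR`
removed, and Pythagoras gives the bound. -/

section Frobenius

variable {m n : Type*} [Fintype m] [Fintype n]

lemma frobNorm_sq (M : Matrix m n ℝ) : frobNorm M ^ 2 = trace (Mᵀ * M) := by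
  rw [frobNorm, Real.sq_sqrt (by positivity), trace, Finset.sum_comm]
  simp only [diag, mul_apply, transpose_apply, sq]

lemma frobNorm_nonneg (M : Matrix m n ℝ) : 0 ≤ frobNorm M := Real.sqrt_nonneg _

lemma frobNorm_transpose (M : Matrix m n ℝ) : frobNorm Mᵀ = frobNorm M := by
  rw [frobNorm, frobNorm, Finset.sum_comm]
  rfl

lemma transpose_eq_self_of_isStarProjection {P : Matrix m m ℝ} (hP : IsStarProjection P) :
    Pᵀ = P := by
  rw [← conjTranspose_eq_transpose_of_trivial]
  exact hP.isSelfAdjoint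

lemma frobNorm_mul_sq_of_isStarProjection {P : Matrix m m ℝ} (hP : IsStarProjection P)
    (M : Matrix m n ℝ) : frobNorm (P * M) ^ 2 = trace (Mᵀ * P * M) := by
  rw [frobNorm_sq, transpose_mul, transpose_eq_self_of_isStarProjection hP, Matrix.mul_assoc,
    ← Matrix.mul_assoc P, hP.isIdempotentElem.eq, ← Matrix.mul_assoc]

lemma frobNorm_sq_eq_add_of_isStarProjection_left [DecidableEq m] {P : Matrix m m ℝ}
    (hP : IsStarProjection P) (M : Matrix m n ℝ) :
    frobNorm M ^ 2 = frobNorm (P * M) ^ 2 + frobNorm ((1 - P) * M) ^ 2 := by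
  rw [frobNorm_mul_sq_of_isStarProjection hP, frobNorm_mul_sq_of_isStarProjection hP.one_sub,
    ← trace_add, ← Matrix.add_mul, ← Matrix.mul_add, add_sub_cancel, Matrix.mul_one,
    frobNorm_sq]

lemma frobNorm_sq_eq_add_of_isStarProjection_right [DecidableEq n] {R : Matrix n n ℝ}
    (hR : IsStarProjection R) (M : Matrix m n ℝ) :
    frobNorm M ^ 2 = frobNorm (M * R) ^ 2 + frobNorm (M * (1 - R)) ^ 2 := by
  rw [← frobNorm_transpose M, ← frobNorm_transpose (M * R), ← frobNorm_transpose (M * (1 - R)),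
    transpose_mul, transpose_mul, transpose_eq_self_of_isStarProjection hR,
    transpose_eq_self_of_isStarProjection hR.one_sub]
  exact frobNorm_sq_eq_add_of_isStarProjection_left hR Mᵀ

theorem frobNorm_sub_mul_mul_le [DecidableEq m] [DecidableEq n] {P : Matrix m m ℝ}
    {R : Matrix n n ℝ} (hP : IsStarProjection P) (hR : IsStarProjection R) {A C : Matrix m n ℝ}
    (hAC_left : (1 - P) * A = (1 - P) * C) (hAC_right : A * (1 - R) = C * (1 - R)) :
    frobNorm (A - P * A * R) ≤ frobNorm C := by
  have hA : A - P * A * R = (1 - P) * C + P * C * (1 - R) := by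
    calc A - P * A * R = (1 - P) * A + P * (A * (1 - R)) := by
          simp only [Matrix.sub_mul, Matrix.mul_sub, Matrix.one_mul, Matrix.mul_one,
            Matrix.mul_assoc]
          abel
      _ = (1 - P) * C + P * C * (1 - R) := by rw [hAC_left, hAC_right, Matrix.mul_assoc]
  have hP_mul : P * (A - P * A * R) = P * C * (1 - R) := by
    rw [hA, Matrix.mul_add, ← Matrix.mul_assoc, hP.mul_one_sub_self, Matrix.zero_mul, zero_add,
      ← Matrix.mul_assoc, ← Matrix.mul_assoc, hP.isIdempotentElem.eq]
  have hP_compl_mul : (1 - P) * (A - P * A * R) = (1 - P) * C := by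
    rw [hA, Matrix.mul_add, ← Matrix.mul_assoc, ← Matrix.mul_assoc, ← Matrix.mul_assoc,
      hP.one_sub_mul_self, Matrix.zero_mul, Matrix.zero_mul, add_zero,
      hP.one_sub.isIdempotentElem.eq]
  have hC : frobNorm C ^ 2 = frobNorm (A - P * A * R) ^ 2 + frobNorm (P * C * R) ^ 2 := by
    rw [frobNorm_sq_eq_add_of_isStarProjection_left hP C,
      frobNorm_sq_eq_add_of_isStarProjection_right hR (P * C),
      frobNorm_sq_eq_add_of_isStarProjection_left hP (A - P * A * R), hP_mul, hP_compl_mul]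
    ring
  refine (pow_le_pow_iff_left₀ (frobNorm_nonneg _) (frobNorm_nonneg _) two_ne_zero).mp ?_
  rw [hC]
  exact le_add_of_nonneg_right (sq_nonneg _)

end Frobenius

section Orthogonal

variable {m k k' : Type*} [Fintype m] [DecidableEq k]

lemma transpose_mul_self_eq_one_of_fromCols [DecidableEq k'] {Q₁ : Matrix m k ℝ}
    {Q₂ : Matrix m k' ℝ}
    (h : (fromCols Q₁ Q₂)ᵀ * fromCols Q₁ Q₂ = 1) : Q₁ᵀ * Q₁ = 1 := by
  rw [transpose_fromCols, fromRows_mul_fromCols, ← fromBlocks_one] at h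
  exact (fromBlocks_inj.mp h).1

lemma isStarProjection_mul_transpose_self [Fintype k] {Q : Matrix m k ℝ} (h : Qᵀ * Q = 1) :
    IsStarProjection (Q * Qᵀ) where
  isIdempotentElem := by
    rw [IsIdempotentElem, Matrix.mul_assoc, ← Matrix.mul_assoc Qᵀ, h, Matrix.one_mul]
  isSelfAdjoint := by
    rw [IsSelfAdjoint, star_eq_conjTranspose, conjTranspose_eq_transpose_of_trivial,
      transpose_mul, transpose_transpose]

end Orthogonal

theorem cur_frobenius_error_bound_general {m n k m' n' : ℕ}
    (A C : Matrix (Fin m) (Fin n) ℝ)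
    (Q1L : Matrix (Fin m) (Fin k) ℝ) (Q2L : Matrix (Fin m) (Fin m') ℝ)
    (Q1U : Matrix (Fin n) (Fin k) ℝ) (Q2U : Matrix (Fin n) (Fin n') ℝ)
    (hL1 : fromCols Q1L Q2L * (fromCols Q1L Q2L)ᵀ = 1)
    (hL2 : (fromCols Q1L Q2L)ᵀ * fromCols Q1L Q2L = 1)
    (hU1 : fromCols Q1U Q2U * (fromCols Q1U Q2U)ᵀ = 1)
    (hU2 : (fromCols Q1U Q2U)ᵀ * fromCols Q1U Q2U = 1)
    (h2L : Q2Lᵀ * A = Q2Lᵀ * C)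
    (h2U : A * Q2U = C * Q2U) :
    frobNorm (A - Q1L * Q1Lᵀ * A * Q1U * Q1Uᵀ) ≤ frobNorm C := by
  rw [transpose_fromCols, fromCols_mul_fromRows] at hL1 hU1
  have hPL : 1 - Q1L * Q1Lᵀ = Q2L * Q2Lᵀ := sub_eq_of_eq_add' hL1.symm
  have hPU : 1 - Q1U * Q1Uᵀ = Q2U * Q2Uᵀ := sub_eq_of_eq_add' hU1.symm
  rw [Matrix.mul_assoc (Q1L * Q1Lᵀ * A)]
  refine frobNorm_sub_mul_mul_le
    (isStarProjection_mul_transpose_self (transpose_mul_self_eq_one_of_fromCols hL2))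
    (isStarProjection_mul_transpose_self (transpose_mul_self_eq_one_of_fromCols hU2)) ?_ ?_
  · rw [hPL, Matrix.mul_assoc, h2L, ← Matrix.mul_assoc]
  · rw [hPU, ← Matrix.mul_assoc, h2U, Matrix.mul_assoc]

/-- Frobenius-norm CUR error bound: with A = B + C, orthogonal
[Q₁ᴸ, Q₂ᴸ] and [Q₁ᵁ, Q₂ᵁ], (Q₂ᴸ)ᵀA = (Q₂ᴸ)ᵀC and AQ₂ᵁ = CQ₂ᵁ, we have
‖A − Q₁ᴸ(Q₁ᴸ)ᵀ A Q₁ᵁ(Q₁ᵁ)ᵀ‖_F ≤ ‖C‖_F. -/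
theorem cur_frobenius_error_bound {m n k m' n' : ℕ}
    (A B C : Matrix (Fin m) (Fin n) ℝ) (hABC : A = B + C)
    (Q1L : Matrix (Fin m) (Fin k) ℝ) (Q2L : Matrix (Fin m) (Fin m') ℝ)
    (Q1U : Matrix (Fin n) (Fin k) ℝ) (Q2U : Matrix (Fin n) (Fin n') ℝ)
    (hL1 : fromCols Q1L Q2L * (fromCols Q1L Q2L)ᵀ = 1)
    (hL2 : (fromCols Q1L Q2L)ᵀ * fromCols Q1L Q2L = 1)
    (hU1 : fromCols Q1U Q2U * (fromCols Q1U Q2U)ᵀ = 1)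
    (hU2 : (fromCols Q1U Q2U)ᵀ * fromCols Q1U Q2U = 1)
    (h2L : Q2Lᵀ * A = Q2Lᵀ * C)
    (h2U : A * Q2U = C * Q2U) :
    frobNorm (A - Q1L * Q1Lᵀ * A * Q1U * Q1Uᵀ) ≤ frobNorm C :=
  cur_frobenius_error_bound_general A C Q1L Q2L Q1U Q2U hL1 hL2 hU1 hU2 h2L h2U
end

section
/- Under the same hypotheses (A = B + C, orthogonal Qᴸ = [Q₁ᴸ, Q₂ᴸ], Qᵁ = [Q₁ᵁ, Q₂ᵁ], (Q₂ᴸ)ᵀA = (Q₂ᴸ)ᵀC, AQ₂ᵁ = CQ₂ᵁ), the spectral norm error satisfies ‖A − Q₁ᴸ(Q₁ᴸ)ᵀ A Q₁ᵁ(Q₁ᵁ)ᵀ‖₂ ≤ 2‖C‖₂. -/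
open Matrix
/-!
Write `P₁ = Q₁ᴸQ₁ᴸᵀ`, `P₂ = Q₂ᴸQ₂ᴸᵀ`, `R₁ = Q₁ᵁQ₁ᵁᵀ`, `R₂ = Q₂ᵁQ₂ᵁᵀ`. Orthogonality gives
`P₁ + P₂ = 1` and `R₁ + R₂ = 1`, and then the hypotheses on `C` turn the residual into
`A - P₁AR₁ = P₂C + P₁CR₂`. Each `Qᵢ` is a column block of a co-isometry, hence a contraction,
so every `Pᵢ`, `Rᵢ` has spectral norm at most `1` and each of the two terms is bounded by `‖C‖₂`.
-/

namespace Matrix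

lemma sub_mul_mul_eq_of_add_eq_one {α m n : Type*} [Ring α] [Fintype m] [Fintype n]
    [DecidableEq m] [DecidableEq n] {P₁ P₂ : Matrix m m α} {R₁ R₂ : Matrix n n α}
    {A C : Matrix m n α} (hP : P₁ + P₂ = 1) (hR : R₁ + R₂ = 1) (hPA : P₂ * A = P₂ * C)
    (hAR : A * R₂ = C * R₂) : A - P₁ * A * R₁ = P₂ * C + P₁ * C * R₂ := by
  have hA : A = P₁ * A * R₁ + P₁ * A * R₂ + P₂ * A := by
    rw [Matrix.mul_assoc, Matrix.mul_assoc, ← Matrix.mul_add, ← Matrix.mul_add, hR,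
      Matrix.mul_one, ← Matrix.add_mul, hP, Matrix.one_mul]
  rw [Matrix.mul_assoc P₁ C, ← hAR, ← hPA, ← Matrix.mul_assoc]
  nth_rewrite 1 [hA]
  abel

section L2OpNorm

open scoped Matrix.Norms.L2Operator

variable {𝕜 m n : Type*} [RCLike 𝕜] [Fintype m] [Fintype n] [DecidableEq n]

lemma specNorm_eq_l2_opNorm (A : Matrix m n ℝ) : specNorm A = ‖A‖ :=
  (l2_opNorm_def A).symm

lemma l2_opNorm_one_le : ‖(1 : Matrix n n 𝕜)‖ ≤ 1 := by
  rw [← diagonal_one, l2_opNorm_diagonal]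
  exact (pi_norm_const_le _).trans norm_one.le

lemma l2_opNorm_le_one_of_mul_conjTranspose_self_eq_one [DecidableEq m] {Q : Matrix m n 𝕜}
    (hQ : Q * Qᴴ = 1) : ‖Q‖ ≤ 1 := by
  have h : ‖Q‖ * ‖Q‖ ≤ 1 := by
    rw [← l2_opNorm_conjTranspose, ← l2_opNorm_conjTranspose_mul_self, conjTranspose_conjTranspose,
      hQ]
    exact l2_opNorm_one_le
  nlinarith [norm_nonneg Q]

lemma l2_opNorm_mul_conjTranspose_self_le_one [DecidableEq m] {Q : Matrix m n 𝕜}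
    (hQ : ‖Q‖ ≤ 1) : ‖Q * Qᴴ‖ ≤ 1 := by
  have h := l2_opNorm_conjTranspose_mul_self Qᴴ
  rw [conjTranspose_conjTranspose, l2_opNorm_conjTranspose] at h
  rw [h]
  exact mul_le_one₀ hQ (norm_nonneg Q) hQ

lemma l2_opNorm_mul_le_of_le_one_left {l : Type*} [Fintype l] [DecidableEq l]
    {P : Matrix m n 𝕜} (hP : ‖P‖ ≤ 1) (M : Matrix n l 𝕜) : ‖P * M‖ ≤ ‖M‖ :=
  (l2_opNorm_mul P M).trans (mul_le_of_le_one_left (norm_nonneg M) hP)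

lemma l2_opNorm_mul_le_of_le_one_right {l : Type*} [Fintype l] [DecidableEq l]
    {R : Matrix n l 𝕜} (hR : ‖R‖ ≤ 1) (M : Matrix m n 𝕜) : ‖M * R‖ ≤ ‖M‖ :=
  (l2_opNorm_mul M R).trans (mul_le_of_le_one_right (norm_nonneg M) hR)

variable {n₁ n₂ : Type*} [Fintype n₁] [Fintype n₂] [DecidableEq n₁] [DecidableEq n₂]

lemma l2_opNorm_le_l2_opNorm_fromCols_left (Q₁ : Matrix m n₁ 𝕜) (Q₂ : Matrix m n₂ 𝕜) :
    ‖Q₁‖ ≤ ‖fromCols Q₁ Q₂‖ := by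
  have hE : ‖(fromCols (1 : Matrix n₁ n₁ 𝕜) (0 : Matrix n₁ n₂ 𝕜))ᴴ‖ ≤ 1 := by
    rw [l2_opNorm_conjTranspose]
    exact l2_opNorm_le_one_of_mul_conjTranspose_self_eq_one (by
      simp [conjTranspose_fromCols_eq_fromRows_conjTranspose, fromCols_mul_fromRows])
  simpa [conjTranspose_fromCols_eq_fromRows_conjTranspose, fromCols_mul_fromRows] using
    l2_opNorm_mul_le_of_le_one_right hE (fromCols Q₁ Q₂)

lemma l2_opNorm_le_l2_opNorm_fromCols_right (Q₁ : Matrix m n₁ 𝕜) (Q₂ : Matrix m n₂ 𝕜) :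
    ‖Q₂‖ ≤ ‖fromCols Q₁ Q₂‖ := by
  have hE : ‖(fromCols (0 : Matrix n₂ n₁ 𝕜) (1 : Matrix n₂ n₂ 𝕜))ᴴ‖ ≤ 1 := by
    rw [l2_opNorm_conjTranspose]
    exact l2_opNorm_le_one_of_mul_conjTranspose_self_eq_one (by
      simp [conjTranspose_fromCols_eq_fromRows_conjTranspose, fromCols_mul_fromRows])
  simpa [conjTranspose_fromCols_eq_fromRows_conjTranspose, fromCols_mul_fromRows] using
    l2_opNorm_mul_le_of_le_one_right hE (fromCols Q₁ Q₂)

end L2OpNorm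

end Matrix

open scoped Matrix.Norms.L2Operator in
theorem cur_spectral_error_bound_general {m n k m' n' : ℕ}
    (A C : Matrix (Fin m) (Fin n) ℝ)
    (Q1L : Matrix (Fin m) (Fin k) ℝ) (Q2L : Matrix (Fin m) (Fin m') ℝ)
    (Q1U : Matrix (Fin n) (Fin k) ℝ) (Q2U : Matrix (Fin n) (Fin n') ℝ)
    (hL1 : fromCols Q1L Q2L * (fromCols Q1L Q2L)ᵀ = 1)
    (hU1 : fromCols Q1U Q2U * (fromCols Q1U Q2U)ᵀ = 1)
    (h2L : Q2Lᵀ * A = Q2Lᵀ * C)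
    (h2U : A * Q2U = C * Q2U) :
    specNorm (A - Q1L * Q1Lᵀ * A * Q1U * Q1Uᵀ) ≤ 2 * specNorm C := by
  simp only [← conjTranspose_eq_transpose_of_trivial] at hL1 hU1 h2L h2U ⊢
  have hQL := l2_opNorm_le_one_of_mul_conjTranspose_self_eq_one hL1
  have hQU := l2_opNorm_le_one_of_mul_conjTranspose_self_eq_one hU1
  have hP1L := l2_opNorm_mul_conjTranspose_self_le_one
    ((l2_opNorm_le_l2_opNorm_fromCols_left Q1L Q2L).trans hQL)
  have hP2L := l2_opNorm_mul_conjTranspose_self_le_one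
    ((l2_opNorm_le_l2_opNorm_fromCols_right Q1L Q2L).trans hQL)
  have hP2U := l2_opNorm_mul_conjTranspose_self_le_one
    ((l2_opNorm_le_l2_opNorm_fromCols_right Q1U Q2U).trans hQU)
  rw [conjTranspose_fromCols_eq_fromRows_conjTranspose, fromCols_mul_fromRows] at hL1 hU1
  have hresidual := sub_mul_mul_eq_of_add_eq_one (A := A) (C := C) hL1 hU1
    (by rw [Matrix.mul_assoc, h2L, Matrix.mul_assoc])
    (by rw [← Matrix.mul_assoc, h2U, Matrix.mul_assoc])
  rw [specNorm_eq_l2_opNorm, specNorm_eq_l2_opNorm, Matrix.mul_assoc (Q1L * Q1Lᴴ * A), hresidual]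
  calc _ ≤ ‖Q2L * Q2Lᴴ * C‖ + ‖Q1L * Q1Lᴴ * C * (Q2U * Q2Uᴴ)‖ := norm_add_le _ _
    _ ≤ ‖C‖ + ‖C‖ := by
      gcongr
      · exact l2_opNorm_mul_le_of_le_one_left hP2L C
      · exact (l2_opNorm_mul_le_of_le_one_right hP2U _).trans
          (l2_opNorm_mul_le_of_le_one_left hP1L C)
    _ = 2 * ‖C‖ := by ring

/-- spectral-norm CUR error bound:
‖A − Q₁ᴸ(Q₁ᴸ)ᵀ A Q₁ᵁ(Q₁ᵁ)ᵀ‖₂ ≤ 2‖C‖₂. -/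
theorem cur_spectral_error_bound {m n k m' n' : ℕ}
    (A B C : Matrix (Fin m) (Fin n) ℝ) (hABC : A = B + C)
    (Q1L : Matrix (Fin m) (Fin k) ℝ) (Q2L : Matrix (Fin m) (Fin m') ℝ)
    (Q1U : Matrix (Fin n) (Fin k) ℝ) (Q2U : Matrix (Fin n) (Fin n') ℝ)
    (hL1 : fromCols Q1L Q2L * (fromCols Q1L Q2L)ᵀ = 1)
    (hL2 : (fromCols Q1L Q2L)ᵀ * fromCols Q1L Q2L = 1)
    (hU1 : fromCols Q1U Q2U * (fromCols Q1U Q2U)ᵀ = 1)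
    (hU2 : (fromCols Q1U Q2U)ᵀ * fromCols Q1U Q2U = 1)
    (h2L : Q2Lᵀ * A = Q2Lᵀ * C)
    (h2U : A * Q2U = C * Q2U) :
    specNorm (A - Q1L * Q1Lᵀ * A * Q1U * Q1Uᵀ) ≤ 2 * specNorm C :=
  cur_spectral_error_bound_general A C Q1L Q2L Q1U Q2U hL1 hU1 h2L h2U
end

section
/- Eckart–Young theorem (Frobenius norm): for A ∈ ℝ^{m×n} and any matrix B of rank at most k, ‖A − B‖_F² ≥ Σ_{j=k+1}^{ρ} σⱼ(A)², where ρ = rank(A), with equality attained by the rank-k truncated SVD. -/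
open Matrix
/-!
The proof identifies `sval A (k + 1)` with the `k`-th singular value `σₖ` of `A` (0-indexed, as in
`LinearMap.singularValues`). Let `vᵢ` be an orthonormal eigenbasis of `Aᴴ A`, sorted by decreasing
eigenvalue. Composing `A` with the orthogonal projection onto `span {vᵢ | i < k}` gives a matrix
of rank `≤ k` within `σₖ` of `A`. Conversely, any `S` of rank `≤ k` kills some unit vector of
`span {vᵢ | i ≤ k}`, and `A` has norm `≥ σₖ` there. This characterization gives Weyl's inequality
`σ_{i+k}(A) ≤ σᵢ(A - B)` for `rank B ≤ k`. Summing its squares and using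
`‖A - B‖_F² = tr ((A - B)ᴴ (A - B)) = ∑ σᵢ(A - B)²` gives the bound. The truncation attains the
bound because it kills `vᵢ` for `i < k` and agrees with `A` on the remaining `vᵢ`.
-/

open Module InnerProductSpace

namespace LinearMap

variable {𝕜 : Type*} [RCLike 𝕜]
  {E : Type*} [NormedAddCommGroup E] [InnerProductSpace 𝕜 E] [FiniteDimensional 𝕜 E]
  {F : Type*} [NormedAddCommGroup F] [InnerProductSpace 𝕜 F] [FiniteDimensional 𝕜 F]
  (T : E →ₗ[𝕜] F)

noncomputable def rightSingularBasis : OrthonormalBasis (Fin (finrank 𝕜 E)) 𝕜 E :=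
  T.isSymmetric_adjoint_comp_self.eigenvectorBasis rfl

theorem adjoint_comp_self_rightSingularBasis (i : Fin (finrank 𝕜 E)) :
    (adjoint T ∘ₗ T) (T.rightSingularBasis i) =
      ((T.singularValues i ^ 2 : ℝ) : 𝕜) • T.rightSingularBasis i := by
  rw [T.sq_singularValues_fin rfl, rightSingularBasis]
  exact T.isSymmetric_adjoint_comp_self.apply_eigenvectorBasis rfl i

theorem norm_apply_sq_eq_sum_inner_rightSingularBasis (x : E) :
    ‖T x‖ ^ 2 =
      ∑ i : Fin (finrank 𝕜 E), T.singularValues i ^ 2 * ‖⟪T.rightSingularBasis i, x⟫_𝕜‖ ^ 2 := by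
  have h : ‖T x‖ ^ 2 = RCLike.re ⟪x, (adjoint T ∘ₗ T) x⟫_𝕜 := by
    rw [comp_apply, adjoint_inner_right, inner_self_eq_norm_sq]
  rw [h, ← T.rightSingularBasis.sum_inner_mul_inner, map_sum]
  refine Finset.sum_congr rfl fun i _ => ?_
  rw [← T.isSymmetric_adjoint_comp_self, adjoint_comp_self_rightSingularBasis, inner_smul_left,
    RCLike.conj_ofReal, mul_left_comm, ← inner_conj_symm x, RCLike.conj_mul]
  norm_cast

theorem norm_apply_le_of_inner_eq_zero {k : ℕ} {x : E}
    (hx : ∀ i : Fin (finrank 𝕜 E), (i : ℕ) < k → ⟪T.rightSingularBasis i, x⟫_𝕜 = 0) :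
    ‖T x‖ ≤ T.singularValues k * ‖x‖ := by
  have hsq : ‖T x‖ ^ 2 ≤ (T.singularValues k * ‖x‖) ^ 2 := by
    rw [mul_pow, ← T.rightSingularBasis.sum_sq_norm_inner_right x, Finset.mul_sum,
      norm_apply_sq_eq_sum_inner_rightSingularBasis]
    refine Finset.sum_le_sum fun i _ => ?_
    rcases lt_or_ge (i : ℕ) k with hi | hi
    · simp [hx i hi]
    · gcongr
      · exact T.singularValues_nonneg _
      · exact T.singularValues_antitone hi
  exact (pow_le_pow_iff_left₀ (norm_nonneg _)
    (mul_nonneg (T.singularValues_nonneg k) (norm_nonneg x)) two_ne_zero).mp hsq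

theorem le_norm_apply_of_inner_eq_zero {k : ℕ} {x : E}
    (hx : ∀ i : Fin (finrank 𝕜 E), k < (i : ℕ) → ⟪T.rightSingularBasis i, x⟫_𝕜 = 0) :
    T.singularValues k * ‖x‖ ≤ ‖T x‖ := by
  have hsq : (T.singularValues k * ‖x‖) ^ 2 ≤ ‖T x‖ ^ 2 := by
    rw [mul_pow, ← T.rightSingularBasis.sum_sq_norm_inner_right x, Finset.mul_sum,
      norm_apply_sq_eq_sum_inner_rightSingularBasis]
    refine Finset.sum_le_sum fun i _ => ?_
    rcases lt_or_ge k (i : ℕ) with hi | hi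
    · simp [hx i hi]
    · gcongr
      · exact T.singularValues_nonneg k
      · exact T.singularValues_antitone hi
  exact (pow_le_pow_iff_left₀ (mul_nonneg (T.singularValues_nonneg k) (norm_nonneg x))
    (norm_nonneg _) two_ne_zero).mp hsq

noncomputable def rightSingularSubspace (k : ℕ) : Submodule 𝕜 E :=
  Submodule.span 𝕜 (Set.range fun i : {i : Fin (finrank 𝕜 E) // (i : ℕ) < k} =>
    T.rightSingularBasis i)

theorem finrank_rightSingularSubspace (k : ℕ) :
    finrank 𝕜 (T.rightSingularSubspace k) = min (finrank 𝕜 E) k := by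
  rw [rightSingularSubspace, finrank_span_eq_card, Fintype.card_subtype, Fin.card_filter_val_lt]
  exact T.rightSingularBasis.orthonormal.linearIndependent.comp _ Subtype.val_injective

theorem rightSingularBasis_mem_rightSingularSubspace {k : ℕ} {i : Fin (finrank 𝕜 E)}
    (hi : (i : ℕ) < k) : T.rightSingularBasis i ∈ T.rightSingularSubspace k :=
  Submodule.subset_span ⟨⟨i, hi⟩, rfl⟩

theorem rightSingularBasis_mem_orthogonal {k : ℕ} {i : Fin (finrank 𝕜 E)}
    (hi : k ≤ (i : ℕ)) : T.rightSingularBasis i ∈ (T.rightSingularSubspace k)ᗮ := by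
  refine (Submodule.isOrtho_span.mpr ?_) (Submodule.mem_span_singleton_self _)
  rintro _ rfl _ ⟨j, rfl⟩
  exact T.rightSingularBasis.orthonormal.inner_eq_zero (by rintro rfl; omega)

/-- In SVD form, `∑_{i < k} σᵢ uᵢ vᵢᴴ` with `uᵢ = T vᵢ / σᵢ`. -/
noncomputable def truncatedSVD (k : ℕ) : E →ₗ[𝕜] F :=
  T ∘ₗ (T.rightSingularSubspace k).starProjection.toLinearMap

theorem finrank_range_truncatedSVD_le (k : ℕ) : finrank 𝕜 (T.truncatedSVD k).range ≤ k := by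
  have hP : range ((T.rightSingularSubspace k).starProjection : E →ₗ[𝕜] E) =
      T.rightSingularSubspace k :=
    Submodule.range_starProjection _
  rw [truncatedSVD, range_comp, hP]
  calc finrank 𝕜 ((T.rightSingularSubspace k).map T)
      ≤ finrank 𝕜 (T.rightSingularSubspace k) := Submodule.finrank_map_le _ _
    _ ≤ k := T.finrank_rightSingularSubspace k ▸ min_le_right _ _

theorem sub_truncatedSVD_apply (k : ℕ) (x : E) :
    (T - T.truncatedSVD k) x = T ((T.rightSingularSubspace k)ᗮ.starProjection x) := by
  simp [truncatedSVD]

theorem opNorm_sub_truncatedSVD_le (k : ℕ) :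
    ‖(T - T.truncatedSVD k).toContinuousLinearMap‖ ≤ T.singularValues k := by
  refine ContinuousLinearMap.opNorm_le_bound _ (T.singularValues_nonneg k) fun x => ?_
  set K := T.rightSingularSubspace k
  calc ‖(T - T.truncatedSVD k) x‖ ≤ T.singularValues k * ‖Kᗮ.starProjection x‖ := by
        rw [sub_truncatedSVD_apply]
        exact T.norm_apply_le_of_inner_eq_zero fun i hi =>
          Submodule.inner_right_of_mem_orthogonal
            (T.rightSingularBasis_mem_rightSingularSubspace hi) (Kᗮ.starProjection_apply_mem x)
    _ ≤ T.singularValues k * ‖x‖ := by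
        gcongr
        · exact T.singularValues_nonneg k
        · exact Kᗮ.norm_starProjection_apply_le x

theorem singularValues_le_opNorm_sub {k : ℕ} (S : E →ₗ[𝕜] F) (hS : finrank 𝕜 S.range ≤ k) :
    T.singularValues k ≤ ‖(T - S).toContinuousLinearMap‖ := by
  rcases le_or_gt (finrank 𝕜 E) k with hk | hk
  · rw [T.singularValues_of_finrank_le hk]
    exact norm_nonneg _
  set W := T.rightSingularSubspace (k + 1)
  have hW : finrank 𝕜 W = k + 1 := by
    rw [T.finrank_rightSingularSubspace]
    omega
  have hWS : ¬Disjoint W (ker S) := fun h => by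
    have := Submodule.finrank_add_finrank_le_of_disjoint h
    have := S.finrank_range_add_finrank_ker
    omega
  obtain ⟨x, hxW, hxS, hx⟩ : ∃ x ∈ W, x ∈ ker S ∧ x ≠ 0 := by
    simpa [Submodule.disjoint_def] using hWS
  have hlow : T.singularValues k * ‖x‖ ≤ ‖T x‖ :=
    T.le_norm_apply_of_inner_eq_zero fun i hi =>
      Submodule.inner_left_of_mem_orthogonal hxW (T.rightSingularBasis_mem_orthogonal hi)
  have hTS : (T - S) x = T x := by simpa using hxS
  refine le_of_mul_le_mul_right ?_ (norm_pos_iff.mpr hx)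
  calc T.singularValues k * ‖x‖ ≤ ‖(T - S) x‖ := hTS ▸ hlow
    _ ≤ ‖(T - S).toContinuousLinearMap‖ * ‖x‖ := (T - S).toContinuousLinearMap.le_opNorm x

theorem isLeast_opNorm_sub_of_finrank_range_le (k : ℕ) :
    IsLeast {c | ∃ S : E →ₗ[𝕜] F, finrank 𝕜 S.range ≤ k ∧ ‖(T - S).toContinuousLinearMap‖ = c}
      (T.singularValues k) :=
  ⟨⟨T.truncatedSVD k, T.finrank_range_truncatedSVD_le k, le_antisymm
      (T.opNorm_sub_truncatedSVD_le k)
      (T.singularValues_le_opNorm_sub _ (T.finrank_range_truncatedSVD_le k))⟩,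
    fun _ ⟨S, hS, hc⟩ => hc ▸ T.singularValues_le_opNorm_sub S hS⟩

theorem singularValues_add_le_singularValues_sub {k : ℕ} (S : E →ₗ[𝕜] F)
    (hS : finrank 𝕜 S.range ≤ k) (i : ℕ) :
    T.singularValues (i + k) ≤ (T - S).singularValues i := by
  set R := (T - S).truncatedSVD i
  have hSR : finrank 𝕜 (S + R).range ≤ i + k :=
    calc finrank 𝕜 (S + R).range ≤ finrank 𝕜 ↥(S.range ⊔ R.range) :=
          Submodule.finrank_mono (range_add_le S R)
      _ ≤ finrank 𝕜 S.range + finrank 𝕜 R.range := Submodule.finrank_add_le_finrank_add_finrank _ _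
      _ ≤ i + k := by
          have hR : finrank 𝕜 R.range ≤ i := (T - S).finrank_range_truncatedSVD_le i
          omega
  calc T.singularValues (i + k) ≤ ‖(T - (S + R)).toContinuousLinearMap‖ :=
        T.singularValues_le_opNorm_sub _ hSR
    _ = ‖(T - S - R).toContinuousLinearMap‖ := by rw [sub_add_eq_sub_sub]
    _ ≤ (T - S).singularValues i := (T - S).opNorm_sub_truncatedSVD_le i

theorem norm_apply_rightSingularBasis (i : Fin (finrank 𝕜 E)) :
    ‖T (T.rightSingularBasis i)‖ = T.singularValues i := by
  have hv : ∀ j, j ≠ i → ⟪T.rightSingularBasis j, T.rightSingularBasis i⟫_𝕜 = 0 :=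
    fun j hj => T.rightSingularBasis.orthonormal.inner_eq_zero hj
  refine le_antisymm ?_ ?_
  · simpa using T.norm_apply_le_of_inner_eq_zero (k := i) fun j hj => hv j (Fin.ne_of_lt hj)
  · simpa using T.le_norm_apply_of_inner_eq_zero (k := i) fun j hj => hv j (Fin.ne_of_gt hj)

theorem sum_norm_apply_sq_eq_sum_sq_singularValues {ι : Type*} [Fintype ι]
    (b : OrthonormalBasis ι 𝕜 E) :
    ∑ i, ‖T (b i)‖ ^ 2 = ∑ i ∈ Finset.range (finrank 𝕜 E), T.singularValues i ^ 2 := by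
  have hT := T.isSymmetric_adjoint_comp_self
  calc ∑ i, ‖T (b i)‖ ^ 2 = RCLike.re ((adjoint T ∘ₗ T).trace 𝕜 E) := by
        simp only [trace_eq_sum_inner _ b, map_sum, comp_apply, adjoint_inner_right,
          inner_self_eq_norm_sq]
    _ = ∑ i : Fin (finrank 𝕜 E), T.singularValues i ^ 2 := by
        simp only [hT.re_trace_eq_sum_eigenvalues rfl, T.sq_singularValues_fin rfl]
    _ = ∑ i ∈ Finset.range (finrank 𝕜 E), T.singularValues i ^ 2 :=
        Fin.sum_univ_eq_sum_range (fun i => T.singularValues i ^ 2) _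

theorem sum_Ico_sq_singularValues_le {k : ℕ} (S : E →ₗ[𝕜] F) (hS : finrank 𝕜 S.range ≤ k) :
    ∑ i ∈ Finset.Ico k (finrank 𝕜 E), T.singularValues i ^ 2 ≤
      ∑ i ∈ Finset.range (finrank 𝕜 E), (T - S).singularValues i ^ 2 :=
  calc ∑ i ∈ Finset.Ico k (finrank 𝕜 E), T.singularValues i ^ 2
      = ∑ i ∈ Finset.range (finrank 𝕜 E - k), T.singularValues (i + k) ^ 2 := by
        rw [Finset.sum_Ico_eq_sum_range]
        simp only [add_comm k]
    _ ≤ ∑ i ∈ Finset.range (finrank 𝕜 E - k), (T - S).singularValues i ^ 2 := by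
        gcongr with i
        · exact T.singularValues_nonneg _
        · exact T.singularValues_add_le_singularValues_sub S hS i
    _ ≤ ∑ i ∈ Finset.range (finrank 𝕜 E), (T - S).singularValues i ^ 2 :=
        Finset.sum_le_sum_of_subset_of_nonneg (Finset.range_subset_range.mpr (Nat.sub_le _ _))
          fun _ _ _ => sq_nonneg _

theorem sum_sq_singularValues_sub_truncatedSVD (k : ℕ) :
    ∑ i ∈ Finset.range (finrank 𝕜 E), (T - T.truncatedSVD k).singularValues i ^ 2 =
      ∑ i ∈ Finset.Ico k (finrank 𝕜 E), T.singularValues i ^ 2 := by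
  have hnorm (i : Fin (finrank 𝕜 E)) : ‖(T - T.truncatedSVD k) (T.rightSingularBasis i)‖ ^ 2 =
      if (i : ℕ) < k then 0 else T.singularValues i ^ 2 := by
    rw [sub_truncatedSVD_apply]
    split_ifs with hi
    · rw [(Submodule.starProjection_apply_eq_zero_iff _).mpr, map_zero, norm_zero, sq, zero_mul]
      rw [Submodule.orthogonal_orthogonal]
      exact T.rightSingularBasis_mem_rightSingularSubspace hi
    · rw [Submodule.starProjection_eq_self_iff.mpr (T.rightSingularBasis_mem_orthogonal
        (not_lt.mp hi)), norm_apply_rightSingularBasis]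
  rw [← sum_norm_apply_sq_eq_sum_sq_singularValues _ T.rightSingularBasis,
    Finset.sum_congr rfl fun i _ => hnorm i,
    Fin.sum_univ_eq_sum_range (fun i => if i < k then 0 else T.singularValues i ^ 2),
    Finset.sum_ite, Finset.sum_const_zero, zero_add]
  congr 1
  ext i
  simp only [Finset.mem_filter, Finset.mem_range, Finset.mem_Ico]
  omega

end LinearMap

namespace Matrix

variable {m n : Type*} [Fintype m] [Fintype n] [DecidableEq n]

theorem rank_eq_finrank_range_toEuclideanLin {𝕜 : Type*} [RCLike 𝕜] (B : Matrix m n 𝕜) :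
    B.rank = finrank 𝕜 (toEuclideanLin B).range := by
  rw [toEuclideanLin_eq_toLin_orthonormal]
  exact rank_eq_finrank_range_toLin _ _ _

theorem frobNorm_sq_eq_sum_sq_singularValues (A : Matrix m n ℝ) :
    frobNorm A ^ 2 = ∑ i ∈ Finset.range (finrank ℝ (EuclideanSpace ℝ n)),
      (toEuclideanLin A).singularValues i ^ 2 := by
  rw [← (toEuclideanLin A).sum_norm_apply_sq_eq_sum_sq_singularValues
    (EuclideanSpace.basisFun n ℝ), frobNorm, Real.sq_sqrt (by positivity), Finset.sum_comm]
  refine Finset.sum_congr rfl fun j _ => ?_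
  rw [EuclideanSpace.norm_sq_eq]
  simp

theorem sval_succ (A : Matrix m n ℝ) (k : ℕ) :
    sval A (k + 1) = (toEuclideanLin A).singularValues k := by
  rw [sval, ← ((toEuclideanLin A).isLeast_opNorm_sub_of_finrank_range_le k).csInf_eq]
  congr 1
  ext c
  constructor
  · rintro ⟨B, hB, rfl⟩
    exact ⟨toEuclideanLin B, by rw [← rank_eq_finrank_range_toEuclideanLin]; omega,
      by simp only [specNorm, map_sub]⟩
  · rintro ⟨S, hS, rfl⟩
    refine ⟨toEuclideanLin.symm S, ?_, by rw [specNorm, map_sub, LinearEquiv.apply_symm_apply]⟩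
    rw [rank_eq_finrank_range_toEuclideanLin, LinearEquiv.apply_symm_apply]
    omega

theorem sum_Icc_sq_sval (A : Matrix m n ℝ) (k : ℕ) :
    ∑ j ∈ Finset.Icc (k + 1) A.rank, sval A j ^ 2 =
      ∑ i ∈ Finset.Ico k (finrank ℝ (EuclideanSpace ℝ n)),
        (toEuclideanLin A).singularValues i ^ 2 := by
  set T := toEuclideanLin A
  have hρ : A.rank = finrank ℝ T.range := rank_eq_finrank_range_toEuclideanLin A
  calc ∑ j ∈ Finset.Icc (k + 1) A.rank, sval A j ^ 2
      = ∑ i ∈ Finset.Ico k (finrank ℝ T.range), T.singularValues i ^ 2 := by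
        rw [hρ, ← Finset.Ico_add_one_right_eq_Icc, ← Finset.sum_Ico_add']
        simp only [sval_succ, T]
    _ = ∑ i ∈ Finset.Ico k (finrank ℝ (EuclideanSpace ℝ n)), T.singularValues i ^ 2 := by
        refine Finset.sum_subset (Finset.Ico_subset_Ico_right T.finrank_range_le) fun i hi hi' => ?_
        simp only [Finset.mem_Ico, not_and, not_lt] at hi hi'
        rw [T.singularValues_eq_zero_iff_le_finrank_range.mpr (hi' hi.1), sq, zero_mul]

end Matrix

/-- Eckart–Young, Frobenius norm: for any B of rank at most k,
‖A − B‖_F² ≥ Σ_{j=k+1}^{rank A} σⱼ(A)², with equality attained by the rank-k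
truncated SVD. -/
theorem eckart_young_frobenius {m n : ℕ} (A : Matrix (Fin m) (Fin n) ℝ) (k : ℕ) :
    (∀ B : Matrix (Fin m) (Fin n) ℝ, B.rank ≤ k →
      ∑ j ∈ Finset.Icc (k + 1) A.rank, sval A j ^ 2 ≤ frobNorm (A - B) ^ 2) ∧
    (∃ B : Matrix (Fin m) (Fin n) ℝ, B.rank ≤ k ∧
      frobNorm (A - B) ^ 2 = ∑ j ∈ Finset.Icc (k + 1) A.rank, sval A j ^ 2) := by
  set T := toEuclideanLin A
  refine ⟨fun B hB => ?_, toEuclideanLin.symm (T.truncatedSVD k), ?_, ?_⟩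
  · rw [sum_Icc_sq_sval, frobNorm_sq_eq_sum_sq_singularValues, map_sub]
    exact T.sum_Ico_sq_singularValues_le _ (rank_eq_finrank_range_toEuclideanLin B ▸ hB)
  · rw [rank_eq_finrank_range_toEuclideanLin, LinearEquiv.apply_symm_apply]
    exact T.finrank_range_truncatedSVD_le k
  · rw [frobNorm_sq_eq_sum_sq_singularValues, map_sub, LinearEquiv.apply_symm_apply,
      T.sum_sq_singularValues_sub_truncatedSVD, sum_Icc_sq_sval]
end
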